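/- Let (B,C) be a normal contact algebra and σ ⊆ B. Then σ is a cluster if and only if d(σ) = {b ∈ B | b* ∉ σ} is an end in (B,C). -/

import Mathlib

variable {B : Type*} [BooleanAlgebra B]

/-- A contact relation on a Boolean algebra: axioms (C1)-(C4). -/
def IsContactRel (C : B → B → Prop) : Prop :=
  (∀ a, a ≠ ⊥ → C a a) ∧
  (∀ a b, C a b → a ≠ ⊥ ∧ b ≠ ⊥) ∧
  (∀ a b, C a b → C b a) ∧
  (∀ a b c, C a (b ⊔ c) ↔ C a b ∨ C a c)

/-- A normal contact relation: additionally axioms (C5) and (C6). -/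
def IsNormalContactRel (C : B → B → Prop) : Prop :=
  IsContactRel C ∧
  (∀ a b, ¬ C a b → ∃ c, ¬ C a c ∧ ¬ C b cᶜ) ∧
  (∀ a, a ≠ ⊤ → ∃ b, b ≠ ⊥ ∧ ¬ C b a)

/-- A cluster in a contact algebra: axioms (K1)-(K3). -/
def IsCluster (C : B → B → Prop) (σ : Set B) : Prop :=
  σ.Nonempty ∧
  (∀ a ∈ σ, ∀ b ∈ σ, C a b) ∧
  (∀ a b, a ⊔ b ∈ σ → a ∈ σ ∨ b ∈ σ) ∧
  (∀ a, (∀ b ∈ σ, C a b) → a ∈ σ)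

/-- An ultrafilter in a Boolean algebra, as a set. -/
def IsUltrafilterSet (u : Set B) : Prop :=
  ⊤ ∈ u ∧ ⊥ ∉ u ∧
  (∀ a b, a ∈ u → a ≤ b → b ∈ u) ∧
  (∀ a b, a ∈ u → b ∈ u → a ⊓ b ∈ u) ∧
  (∀ a : B, a ∈ u ∨ aᶜ ∈ u)

/-- Non-tangential inclusion: a ≪ b iff ¬(a C bᶜ). -/
def Ntangle (C : B → B → Prop) (a b : B) : Prop := ¬ C a bᶜ

/-- An end in a normal contact algebra: axioms (E1), (E2). -/
def IsEnd (C : B → B → Prop) (ξ : Set B) : Prop :=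
  (∀ b ∈ ξ, ∀ c ∈ ξ, ∃ a ∈ ξ, a ≠ ⊥ ∧ Ntangle C a b ∧ Ntangle C a c) ∧
  (∀ a b : B, Ntangle C a b → aᶜ ∈ ξ ∨ b ∈ ξ)

/-- A filter in a Boolean algebra, as a set. -/
def IsFilterSet (v : Set B) : Prop :=
  v.Nonempty ∧ (∀ a b, a ∈ v → a ≤ b → b ∈ v) ∧ (∀ a b, a ∈ v → b ∈ v → a ⊓ b ∈ v)

/-- A round filter: a filter in which every element non-tangentially
contains some element. -/
def IsRoundFilter (C : B → B → Prop) (v : Set B) : Prop :=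
  IsFilterSet v ∧ ∀ b ∈ v, ∃ a ∈ v, Ntangle C a b

/-!
If `σ` is a cluster, then `d(σ)` is a filter (upward closure and closure under `⊓` dualize the
maximality axiom (K3) and the primeness axiom (K2)), it is round by normality (C5), and it omits `⊥`;
a round filter without `⊥` satisfies (E1), and (E2) is just (K1) read through `d`. Conversely, any
two elements of an end are in contact, since (E1) puts a nonzero element below both, and an end is
closed under `⊓`. For `σ = {a | aᶜ ∉ ξ}` this gives (K1) from (E2), (K2) from `⊓`-closure, and (K3)
by separating, via (C5), the given element from a witness `e ≪ aᶜ` in `ξ`.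
-/

section

variable {C : B → B → Prop} {a a' b b' c : B}

namespace IsContactRel

theorem ne_bot_left (hC : IsContactRel C) (h : C a b) : a ≠ ⊥ := (hC.2.1 a b h).1

theorem symm (hC : IsContactRel C) (h : C a b) : C b a := hC.2.2.1 a b h

theorem sup_right_iff (hC : IsContactRel C) : C a (b ⊔ c) ↔ C a b ∨ C a c := hC.2.2.2 a b c

theorem mono_right (hC : IsContactRel C) (h : C a b) (hb : b ≤ b') : C a b' := by
  simpa only [sup_eq_right.mpr hb] using hC.sup_right_iff.mpr (Or.inl h : C a b ∨ C a b')

theorem mono (hC : IsContactRel C) (h : C a b) (ha : a ≤ a') (hb : b ≤ b') : C a' b' :=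
  hC.symm (hC.mono_right (hC.symm (hC.mono_right h hb)) ha)

theorem of_inf_ne_bot (hC : IsContactRel C) (h : a ⊓ b ≠ ⊥) : C a b :=
  hC.mono (hC.1 _ h) inf_le_left inf_le_right

theorem top_right (hC : IsContactRel C) (ha : a ≠ ⊥) : C a ⊤ :=
  hC.of_inf_ne_bot (by rwa [inf_top_eq])

theorem le_of_ntangle (hC : IsContactRel C) (h : Ntangle C a b) : a ≤ b := by
  by_contra hab
  exact h (hC.of_inf_ne_bot fun h0 => hab (disjoint_compl_right_iff.mp (disjoint_iff.mpr h0)))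

theorem ntangle_mono_right (hC : IsContactRel C) (h : Ntangle C a b) (hb : b ≤ b') :
    Ntangle C a b' :=
  fun h' => h (hC.mono_right h' (compl_le_compl hb))

theorem ntangle_inf (hC : IsContactRel C) (hb : Ntangle C a b) (hc : Ntangle C a c) :
    Ntangle C a (b ⊓ c) := by
  rw [Ntangle, compl_inf, hC.sup_right_iff]
  exact not_or.mpr ⟨hb, hc⟩

end IsContactRel

/-- The set `d(σ)` of the paper. -/
def dualSet (σ : Set B) : Set B := {b | bᶜ ∉ σ}

theorem mem_dualSet {σ : Set B} : b ∈ dualSet σ ↔ bᶜ ∉ σ := Iff.rfl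

theorem compl_mem_dualSet {σ : Set B} : aᶜ ∈ dualSet σ ↔ a ∉ σ := by
  rw [mem_dualSet, compl_compl]

namespace IsCluster

variable {σ : Set B}

theorem bot_notMem (hC : IsContactRel C) (hσ : IsCluster C σ) : (⊥ : B) ∉ σ :=
  fun h => hC.ne_bot_left (hσ.2.1 ⊥ h ⊥ h) rfl

theorem mem_of_le (hC : IsContactRel C) (hσ : IsCluster C σ) (ha : a ∈ σ) (haa' : a ≤ a') :
    a' ∈ σ :=
  hσ.2.2.2 a' fun b hb => hC.mono (hσ.2.1 a ha b hb) haa' le_rfl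

theorem top_mem (hC : IsContactRel C) (hσ : IsCluster C σ) : (⊤ : B) ∈ σ :=
  hσ.mem_of_le hC hσ.1.some_mem le_top

theorem exists_ntangle_of_mem_dualSet (hC : IsNormalContactRel C) (hσ : IsCluster C σ)
    (hb : b ∈ dualSet σ) : ∃ e ∈ dualSet σ, Ntangle C e b := by
  obtain ⟨x, hx, hbx⟩ : ∃ x ∈ σ, ¬ C bᶜ x := by
    by_contra! h
    exact hb (hσ.2.2.2 _ h)
  obtain ⟨e, hbe, hxe⟩ := hC.2.1 bᶜ x hbx
  exact ⟨e, fun he => hxe (hσ.2.1 x hx _ he), fun h => hbe (hC.1.symm h)⟩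

theorem isRoundFilter_dualSet (hC : IsNormalContactRel C) (hσ : IsCluster C σ) :
    IsRoundFilter C (dualSet σ) := by
  refine ⟨⟨⟨⊤, ?_⟩, fun a b ha hab hb => ?_, fun a b ha hb hab => ?_⟩,
    fun b hb => hσ.exists_ntangle_of_mem_dualSet hC hb⟩
  · simpa only [mem_dualSet, compl_top] using hσ.bot_notMem hC.1
  · exact ha (hσ.mem_of_le hC.1 hb (compl_le_compl hab))
  · rw [compl_inf] at hab
    exact (hσ.2.2.1 _ _ hab).elim ha hb

end IsCluster

theorem IsRoundFilter.isEnd_of_bot_notMem (hC : IsContactRel C) {v : Set B}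
    (hv : IsRoundFilter C v) (hbot : (⊥ : B) ∉ v)
    (hE2 : ∀ a b : B, Ntangle C a b → aᶜ ∈ v ∨ b ∈ v) : IsEnd C v := by
  refine ⟨fun b hb c hc => ?_, hE2⟩
  obtain ⟨a, ha, hab⟩ := hv.2 _ (hv.1.2.2 b c hb hc)
  exact ⟨a, ha, fun h => hbot (h ▸ ha), hC.ntangle_mono_right hab inf_le_left,
    hC.ntangle_mono_right hab inf_le_right⟩

theorem IsCluster.isEnd_dualSet (hC : IsNormalContactRel C) {σ : Set B} (hσ : IsCluster C σ) :
    IsEnd C (dualSet σ) := by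
  refine (hσ.isRoundFilter_dualSet hC).isEnd_of_bot_notMem hC.1 ?_ fun a b hab => ?_
  · simpa only [mem_dualSet, compl_bot, not_not] using hσ.top_mem hC.1
  · rw [compl_mem_dualSet, mem_dualSet, ← not_and_or]
    exact fun ⟨ha, hb⟩ => hab (hσ.2.1 a ha _ hb)

namespace IsEnd

variable {ξ : Set B}

theorem bot_notMem (hC : IsContactRel C) (hξ : IsEnd C ξ) : (⊥ : B) ∉ ξ := by
  intro hbot
  obtain ⟨a, -, ha, hab, -⟩ := hξ.1 ⊥ hbot ⊥ hbot
  exact hab (by simpa only [compl_bot] using hC.top_right ha)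

theorem contact (hC : IsContactRel C) (hξ : IsEnd C ξ) (hb : b ∈ ξ) (hc : c ∈ ξ) : C b c := by
  obtain ⟨a, -, ha, hab, hac⟩ := hξ.1 b hb c hc
  exact hC.mono (hC.1 a ha) (hC.le_of_ntangle hab) (hC.le_of_ntangle hac)

theorem compl_notMem (hC : IsContactRel C) (hξ : IsEnd C ξ) (hb : b ∈ ξ) : bᶜ ∉ ξ := by
  intro hb'
  obtain ⟨a, -, ha, hab, hac⟩ := hξ.1 b hb bᶜ hb'
  have : a ≤ b ⊓ bᶜ := le_inf (hC.le_of_ntangle hab) (hC.le_of_ntangle hac)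
  exact ha (le_bot_iff.mp (inf_compl_self b ▸ this))

theorem inf_mem (hC : IsContactRel C) (hξ : IsEnd C ξ) (hb : b ∈ ξ) (hc : c ∈ ξ) : b ⊓ c ∈ ξ := by
  obtain ⟨a, ha, -, hab, hac⟩ := hξ.1 b hb c hc
  exact (hξ.2 a _ (hC.ntangle_inf hab hac)).resolve_left (hξ.compl_notMem hC ha)

end IsEnd

theorem isCluster_of_isEnd_dualSet (hC : IsNormalContactRel C) {σ : Set B}
    (hξ : IsEnd C (dualSet σ)) : IsCluster C σ := by
  have htop : (⊤ : B) ∈ σ := by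
    simpa only [mem_dualSet, compl_bot, not_not] using hξ.bot_notMem hC.1
  refine ⟨⟨⊤, htop⟩, fun a ha b hb => ?_, fun a b hab => ?_, fun a ha => ?_⟩
  · by_contra h
    have hab : Ntangle C a bᶜ := by rwa [Ntangle, compl_compl]
    simpa only [compl_mem_dualSet, ha, hb, not_true, or_self] using hξ.2 a bᶜ hab
  · by_contra! h
    have := hξ.inf_mem hC.1 (compl_mem_dualSet.mpr h.1) (compl_mem_dualSet.mpr h.2)
    rw [← compl_sup, compl_mem_dualSet] at this
    exact this hab
  · by_contra haσ
    obtain ⟨e, he, -, hea, -⟩ := hξ.1 aᶜ (compl_mem_dualSet.mpr haσ) aᶜ (compl_mem_dualSet.mpr haσ)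
    rw [Ntangle, compl_compl] at hea
    obtain ⟨c, hec, hac⟩ := hC.2.1 e a hea
    have hc : cᶜ ∈ σ := not_not.mp fun hc => hec (hξ.contact hC.1 he hc)
    exact hac (ha cᶜ hc)

end

/-- σ is a cluster iff d(σ) = {b | bᶜ ∉ σ} is an end. -/
theorem cluster_iff_dual_end (C : B → B → Prop)
    (hC : IsNormalContactRel C) (σ : Set B) :
    IsCluster C σ ↔ IsEnd C {b : B | bᶜ ∉ σ} :=
  ⟨IsCluster.isEnd_dualSet hC, isCluster_of_isEnd_dualSet hC⟩
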